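/- Let Γ be a signed graph, v a vertex with pendant neighbors v_1,…,v_s (each vv_i a pendant edge), u another vertex, and x a unit eigenvector for the index λ(Γ). Let Γ' be obtained by moving the pendant edges from v to u (keeping signs). If x_u > x_v > 0 or x_u < x_v < 0, then λ(Γ') > λ(Γ). -/

import Mathlib

open Matrix

structure SignedGraph (n : ℕ) where
  sign : Fin n → Fin n → ℝ
  symm : ∀ i j, sign i j = sign j i
  loopless : ∀ i, sign i i = 0
  vals : ∀ i j, sign i j = 0 ∨ sign i j = 1 ∨ sign i j = -1

/-- The adjacency matrix of a signed graph. -/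
def SignedGraph.adj {n : ℕ} (Γ : SignedGraph n) : Matrix (Fin n) (Fin n) ℝ :=
  Matrix.of Γ.sign

/-- The underlying simple graph of a signed graph. -/
def SignedGraph.graph {n : ℕ} (Γ : SignedGraph n) : SimpleGraph (Fin n) where
  Adj i j := Γ.sign i j ≠ 0
  symm := ⟨fun i j h => by show Γ.sign j i ≠ 0; rw [Γ.symm j i]; exact h⟩
  loopless := ⟨fun i h => h (Γ.loopless i)⟩

/-- `lam` is the index (largest eigenvalue) of the signed graph `Γ`. -/
def SignedGraph.IsIndex {n : ℕ} (Γ : SignedGraph n) (lam : ℝ) : Prop :=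
  (∃ y : Fin n → ℝ, y ≠ 0 ∧ Γ.adj.mulVec y = lam • y) ∧
  ∀ μ : ℝ, (∃ y : Fin n → ℝ, y ≠ 0 ∧ Γ.adj.mulVec y = μ • y) → μ ≤ lam

lemma myRayleigh {n : ℕ} (A : Matrix (Fin n) (Fin n) ℝ) (hA : A.IsHermitian) (lam : ℝ)
    (hmax : ∀ μ : ℝ, (∃ y : Fin n → ℝ, y ≠ 0 ∧ A.mulVec y = μ • y) → μ ≤ lam)
    (x : Fin n → ℝ) : x ⬝ᵥ A *ᵥ x ≤ lam * (x ⬝ᵥ x) := by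
  have hev : ∀ i, hA.eigenvalues i ≤ lam := by
    intro i
    refine hmax _ ⟨⇑(hA.eigenvectorBasis i), ?_, hA.mulVec_eigenvectorBasis i⟩
    intro h
    apply hA.eigenvectorBasis.orthonormal.ne_zero i
    ext j
    exact congrFun h j
  set U : Matrix (Fin n) (Fin n) ℝ := (hA.eigenvectorUnitary : Matrix (Fin n) (Fin n) ℝ) with hUdef
  have hstar : star U = Uᵀ := by
    rw [Matrix.star_eq_conjTranspose, Matrix.conjTranspose_eq_transpose_of_trivial]
  have hU1 : U * star U = 1 := Matrix.mem_unitaryGroup_iff.mp hA.eigenvectorUnitary.2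
  set y : Fin n → ℝ := star U *ᵥ x with hy
  have hxy : U *ᵥ y = x := by
    rw [hy, Matrix.mulVec_mulVec, hU1, Matrix.one_mulVec]
  have hdot : ∀ z : Fin n → ℝ, x ⬝ᵥ U *ᵥ z = y ⬝ᵥ z := by
    intro z
    rw [Matrix.dotProduct_mulVec, hy, hstar, ← Matrix.mulVec_transpose]
  have hyy : x ⬝ᵥ x = y ⬝ᵥ y := by
    rw [← hdot y, hxy]
  have hAx : x ⬝ᵥ A *ᵥ x = ∑ i, hA.eigenvalues i * y i ^ 2 := by
    conv_lhs => rw [hA.spectral_theorem, Unitary.conjStarAlgAut_apply]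
    rw [← Matrix.mulVec_mulVec, ← Matrix.mulVec_mulVec, hdot]
    simp only [Matrix.mulVec_diagonal, dotProduct, Function.comp_apply,
      RCLike.ofReal_real_eq_id, id_eq]
    refine Finset.sum_congr rfl fun i _ => by ring
  calc x ⬝ᵥ A *ᵥ x = ∑ i, hA.eigenvalues i * y i ^ 2 := hAx
    _ ≤ ∑ i, lam * y i ^ 2 := by
        refine Finset.sum_le_sum fun i _ => ?_
        exact mul_le_mul_of_nonneg_right (hev i) (sq_nonneg _)
    _ = lam * (y ⬝ᵥ y) := by
        rw [← Finset.mul_sum]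
        congr 1
        simp [dotProduct, sq]
    _ = lam * (x ⬝ᵥ x) := by rw [hyy]

lemma SignedGraph.adj_isHermitian {n : ℕ} (Γ : SignedGraph n) : Γ.adj.IsHermitian := by
  ext i j
  simp [Matrix.conjTranspose_apply, SignedGraph.adj, Γ.symm i j]

/-- Moving pendant edges `vv_1, …, vv_s` from `v` to `u` (keeping their signs) strictly
increases the index, provided `x_u > x_v > 0` or `x_u < x_v < 0` for a unit eigenvector
`x` of the index of `Γ`. -/
theorem stmt_3 {n : ℕ} (Γ Γ' : SignedGraph n) (u v : Fin n) (huv : u ≠ v)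
    (S : Finset (Fin n)) (hS : S.Nonempty) (huS : u ∉ S) (hvS : v ∉ S)
    (hedges : ∀ i ∈ S, Γ.graph.Adj v i)
    (hpend : ∀ i ∈ S, ∀ j, j ≠ v → Γ.sign i j = 0)
    (hmove1 : ∀ i ∈ S, Γ'.sign u i = Γ.sign v i)
    (hmove2 : ∀ i ∈ S, Γ'.sign v i = 0)
    (hsame : ∀ i j, ¬ ((i = u ∨ i = v) ∧ j ∈ S) → ¬ ((j = u ∨ j = v) ∧ i ∈ S) →
      Γ'.sign i j = Γ.sign i j)
    (lam : ℝ) (hlam : Γ.IsIndex lam)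
    (x : Fin n → ℝ) (hunit : ∑ i, x i ^ 2 = 1) (heig : Γ.adj.mulVec x = lam • x)
    (hcond : (0 < x v ∧ x v < x u) ∨ (x u < x v ∧ x v < 0)) :
    ∀ lam' : ℝ, Γ'.IsIndex lam' → lam < lam' := by
  intro lam' hlam'
  have hxv : x v ≠ 0 := by
    rcases hcond with ⟨h1, _⟩ | ⟨_, h2⟩ <;> [exact ne_of_gt h1; exact ne_of_lt h2]
  have hxx : x ⬝ᵥ x = 1 := by
    rw [← hunit]; simp [dotProduct, sq]
  have hrel : ∀ i ∈ S, Γ.sign v i * x v = lam * x i := by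
    intro i hiS
    have h1 : (Γ.adj *ᵥ x) i = lam * x i := by rw [heig]; simp
    rw [← h1]
    simp only [Matrix.mulVec, dotProduct, SignedGraph.adj, Matrix.of_apply]
    rw [Finset.sum_eq_single v]
    · rw [Γ.symm i v]
    · intro j _ hj; rw [hpend i hiS j hj, zero_mul]
    · intro h; exact absurd (Finset.mem_univ v) h
  obtain ⟨i₀, hi₀⟩ := hS
  have hσ : Γ.sign v i₀ * Γ.sign v i₀ = 1 := by
    have hne : Γ.sign v i₀ ≠ 0 := hedges i₀ hi₀
    rcases Γ.vals v i₀ with h | h | h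
    · exact absurd h hne
    · rw [h]; norm_num
    · rw [h]; norm_num
  have hi₀v : i₀ ≠ v := fun h => hvS (h ▸ hi₀)
  have hlampos : 0 < lam := by
    set σ := Γ.sign v i₀ with hσdef
    set z : Fin n → ℝ := fun j => (if j = v then (1:ℝ) else 0) + (if j = i₀ then σ else 0) with hz
    have hzdot : ∀ w : Fin n → ℝ, z ⬝ᵥ w = w v + σ * w i₀ := by
      intro w
      simp only [hz, dotProduct, add_mul, ite_mul, one_mul, zero_mul,
        Finset.sum_add_distrib, Finset.sum_ite_eq', Finset.mem_univ, if_true]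
    have hAz : ∀ j, (Γ.adj *ᵥ z) j = Γ.sign j v + σ * Γ.sign j i₀ := by
      intro j
      simp only [Matrix.mulVec, dotProduct, SignedGraph.adj, Matrix.of_apply, hz,
        mul_add, mul_ite, mul_one, mul_zero, Finset.sum_add_distrib,
        Finset.sum_ite_eq', Finset.mem_univ, if_true]
      ring
    have hzAz : z ⬝ᵥ Γ.adj *ᵥ z = 2 := by
      rw [hzdot, hAz v, hAz i₀, Γ.loopless, Γ.loopless, Γ.symm i₀ v, ← hσdef]
      linear_combination 2 * hσ
    have hzz : z ⬝ᵥ z = 2 := by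
      rw [hzdot]
      have h1 : z v = 1 := by simp [hz, hi₀v.symm, Ne.symm hi₀v]
      have h2 : z i₀ = σ := by simp [hz, hi₀v]
      rw [h1, h2]
      linear_combination hσ
    have := myRayleigh Γ.adj Γ.adj_isHermitian lam hlam.2 z
    rw [hzAz, hzz] at this
    linarith
  set T : ℝ := ∑ i ∈ S, Γ.sign v i * x i with hT
  have hTxv : T * x v = lam * ∑ i ∈ S, x i ^ 2 := by
    rw [hT, Finset.sum_mul, Finset.mul_sum]
    refine Finset.sum_congr rfl fun i hi => ?_
    linear_combination x i * hrel i hi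
  have hx0 : x i₀ ≠ 0 := by
    intro h
    have h2 := hrel i₀ hi₀
    rw [h, mul_zero] at h2
    rcases mul_eq_zero.mp h2 with h3 | h3
    · exact hedges i₀ hi₀ h3
    · exact hxv h3
  have hsumpos : 0 < ∑ i ∈ S, x i ^ 2 := by
    refine Finset.sum_pos' (fun i _ => sq_nonneg _) ⟨i₀, hi₀, ?_⟩
    positivity
  have hTxvpos : 0 < T * x v := by rw [hTxv]; positivity
  set a : Fin n → ℝ := fun j => (if j = u then (1:ℝ) else 0) - (if j = v then 1 else 0) with ha
  set w : Fin n → ℝ := fun j => if j ∈ S then Γ.sign v j else 0 with hw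
  have hau : a u = 1 := by simp [ha, huv]
  have hav : a v = -1 := by simp [ha, Ne.symm huv]
  have haS : ∀ m ∈ S, a m = 0 := by
    intro m hm
    have h1 : m ≠ u := fun h => huS (h ▸ hm)
    have h2 : m ≠ v := fun h => hvS (h ▸ hm)
    simp [ha, h1, h2]
  have hwS : ∀ m ∈ S, w m = Γ.sign v m := fun m hm => by simp [hw, hm]
  have hwu : w u = 0 := by simp [hw, huS]
  have hwv : w v = 0 := by simp [hw, hvS]
  have hwn : ∀ m, m ∉ S → w m = 0 := fun m hm => by simp [hw, hm]
  have hE : ∀ j k, Γ'.sign j k - Γ.sign j k = a j * w k + w j * a k := by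
    intro j k
    by_cases hkS : k ∈ S
    · have hku : k ≠ u := fun h => huS (h ▸ hkS)
      have hkv : k ≠ v := fun h => hvS (h ▸ hkS)
      by_cases hju : j = u
      · rw [hju, hmove1 k hkS, hau, hwu, hwS k hkS, haS k hkS, Γ.symm u k,
          hpend k hkS u huv]
        ring
      · by_cases hjv : j = v
        · rw [hjv, hmove2 k hkS, hav, hwv, hwS k hkS, haS k hkS, Γ.symm v k]
          have h0 : Γ.sign k v = Γ.sign v k := Γ.symm k v
          rw [h0]
          ring
        · have h1 : Γ'.sign j k = Γ.sign j k := by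
            refine hsame j k ?_ ?_
            · rintro ⟨h | h, -⟩; exacts [hju h, hjv h]
            · rintro ⟨h | h, -⟩; exacts [hku h, hkv h]
          have haj : a j = 0 := by simp [ha, hju, hjv]
          rw [h1, haj, haS k hkS]
          ring
    · by_cases hjS : j ∈ S
      · have hwj := hwS j hjS
        have haj := haS j hjS
        by_cases hku : k = u
        · have h1 : Γ'.sign j k = Γ.sign v j := by rw [Γ'.symm, hku]; exact hmove1 j hjS
          have h0 : Γ.sign j k = 0 := by rw [hku]; exact hpend j hjS u huv
          rw [h1, h0, hwj, haj, hku, hau, hwu]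
          ring
        · by_cases hkv : k = v
          · have h1 : Γ'.sign j k = 0 := by rw [Γ'.symm, hkv]; exact hmove2 j hjS
            have h0 : Γ.sign j k = Γ.sign v j := by rw [hkv]; exact Γ.symm j v
            rw [h1, h0, hwj, haj, hkv, hav, hwv]
            ring
          · have h1 : Γ'.sign j k = Γ.sign j k := by
              refine hsame j k ?_ ?_
              · rintro ⟨-, h⟩; exact hkS h
              · rintro ⟨h | h, -⟩; exacts [hku h, hkv h]
            have hak : a k = 0 := by simp [ha, hku, hkv]
            rw [h1, haj, hak, hwn k hkS]
            ring
      · have h1 : Γ'.sign j k = Γ.sign j k := by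
          refine hsame j k ?_ ?_
          · rintro ⟨-, h⟩; exact hkS h
          · rintro ⟨-, h⟩; exact hjS h
        rw [h1, hwn k hkS, hwn j hjS]
        ring
  have hax : ∑ j, x j * a j = x u - x v := by
    simp only [ha, mul_sub, mul_ite, mul_one, mul_zero, Finset.sum_sub_distrib,
      Finset.sum_ite_eq', Finset.mem_univ, if_true]
  have hwx : ∑ j, x j * w j = T := by
    rw [hT]
    simp only [hw, mul_ite, mul_zero]
    rw [Finset.sum_ite_mem, Finset.univ_inter]
    refine Finset.sum_congr rfl fun i _ => by ring
  have hax' : ∑ j, a j * x j = x u - x v := by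
    rw [← hax]; exact Finset.sum_congr rfl fun j _ => by ring
  have hwx' : ∑ j, w j * x j = T := by
    rw [← hwx]; exact Finset.sum_congr rfl fun j _ => by ring
  have hform : ∀ (M : Matrix (Fin n) (Fin n) ℝ),
      x ⬝ᵥ M *ᵥ x = ∑ j, ∑ k, x j * M j k * x k := by
    intro M
    simp only [dotProduct, Matrix.mulVec, Finset.mul_sum]
    exact Finset.sum_congr rfl fun j _ => Finset.sum_congr rfl fun k _ => by ring
  have hdiff : x ⬝ᵥ Γ'.adj *ᵥ x = x ⬝ᵥ Γ.adj *ᵥ x + 2 * (x u - x v) * T := by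
    have key : (∑ j, ∑ k, x j * Γ'.adj j k * x k) - (∑ j, ∑ k, x j * Γ.adj j k * x k)
        = 2 * (x u - x v) * T := by
      calc (∑ j, ∑ k, x j * Γ'.adj j k * x k) - (∑ j, ∑ k, x j * Γ.adj j k * x k)
          = ∑ j, ∑ k, (x j * a j * (w k * x k) + x j * w j * (a k * x k)) := by
            rw [← Finset.sum_sub_distrib]
            refine Finset.sum_congr rfl fun j _ => ?_
            rw [← Finset.sum_sub_distrib]
            refine Finset.sum_congr rfl fun k _ => ?_
            simp only [SignedGraph.adj, Matrix.of_apply]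
            linear_combination (x j * x k) * hE j k
        _ = ∑ j, (x j * a j * ∑ k, w k * x k + x j * w j * ∑ k, a k * x k) := by
            refine Finset.sum_congr rfl fun j _ => ?_
            rw [Finset.sum_add_distrib, Finset.mul_sum, Finset.mul_sum]
        _ = (∑ j, x j * a j) * (∑ k, w k * x k) + (∑ j, x j * w j) * (∑ k, a k * x k) := by
            rw [Finset.sum_add_distrib, ← Finset.sum_mul, ← Finset.sum_mul]
        _ = 2 * (x u - x v) * T := by
            rw [hax, hwx, hax', hwx']
            ring
    rw [hform, hform]
    linarith
  have hxAx : x ⬝ᵥ Γ.adj *ᵥ x = lam := by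
    rw [heig]
    simp only [dotProduct_smul, smul_eq_mul, hxx, mul_one]
  have hpos : 0 < 2 * (x u - x v) * T := by
    rcases hcond with ⟨h1, h2⟩ | ⟨h1, h2⟩
    · have hTpos : 0 < T := by nlinarith [hTxvpos]
      nlinarith
    · have hTneg : T < 0 := by nlinarith [hTxvpos]
      nlinarith
  have hfin := myRayleigh Γ'.adj Γ'.adj_isHermitian lam' hlam'.2 x
  rw [hxx, mul_one, hdiff, hxAx] at hfin
  linarith
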